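/- arXiv:1907.05946 — 2 statements merged into one kernel-verified Lean document; each statement's English description precedes it below -/
import Mathlib

section
/- Let p, q : ℝⁿ → ℝ be measurable with 1 < p⁻ ≤ p(x) ≤ p⁺ < ∞ and 0 ≤ q(x) ≤ q⁺ < ∞. Then there is a constant C > 0, depending only on p⁻, p⁺ and q⁺, such that for every cube Q ⊂ ℝⁿ and every t ≥ 0: t ≤ C · (⨍_Q φ^{-1}_{p(x), q(x)}(t) dx) · (⨍_Q (log(e + t))^{q(x)} φ^{-1}_{p'(x), q(x)}(t) dx), where p'(x) = p(x)/(p(x) − 1). -/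
/-!
Write `L = log (e + t)`. Testing `u = (ε t / L ^ b) ^ (1 / a)` in the definition of the
generalized inverse, and using `log (e + u) ≤ 2 L`, gives `φ⁻¹_{a,b}(t) ≥ (ε t / L ^ b) ^ (1 / a)`
with `ε = (2 · 2 ^ q⁺)⁻¹` for all `a ≥ 1`, `0 ≤ b ≤ q⁺`. Since `1 / p + 1 / p' = 1`, the two
integrands `f = φ⁻¹_{p,q}(t)` and `g = L ^ q φ⁻¹_{p',q}(t)` then satisfy `f g ≥ ε t` pointwise,
and AM–GM applied to `f / ⨍ f` and `g / ⨍ g` turns this into `(⨍ f) (⨍ g) ≥ ε t`.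
-/

open MeasureTheory ENNReal NNReal Set

noncomputable section

abbrev Rn (n : ℕ) := EuclideanSpace ℝ (Fin n)

namespace VarExp

variable {n : ℕ}

/-- Closed axis-parallel cube with center `c` and sidelength `l`. -/
def cubeSet (c : Rn n) (l : ℝ) : Set (Rn n) := {x | ∀ i, |x i - c i| ≤ l / 2}

/-- Characteristic function of a set. -/
def chi (s : Set (Rn n)) : Rn n → ℝ := s.indicator fun _ => 1

/-- Average of `b` over the cube with center `c` and sidelength `l`. -/
def cavg (c : Rn n) (l : ℝ) (b : Rn n → ℝ) : ℝ := ⨍ x in cubeSet c l, b x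

/-- Global log-Hölder continuity with explicit constants. -/
def LogHolderWith (p : Rn n → ℝ) (C pinf : ℝ) : Prop :=
  (∀ x y : Rn n, |p x - p y| ≤ C / Real.log (Real.exp 1 + 1 / ‖x - y‖)) ∧
  (∀ x : Rn n, |p x - pinf| ≤ C / Real.log (Real.exp 1 + ‖x‖))

/-- Global log-Hölder continuity (the class `P^log`). -/
def LogHolder (p : Rn n → ℝ) : Prop := ∃ C pinf : ℝ, 0 < C ∧ LogHolderWith p C pinf

/-- The class `P^loglog`: bounded and loglog-Hölder continuous. -/
def LogLogHolder (q : Rn n → ℝ) : Prop :=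
  (∃ M : ℝ, ∀ x, |q x| ≤ M) ∧
  ∃ C : ℝ, 0 < C ∧ ∀ x y : Rn n,
    |q x - q y| ≤ C / Real.log (Real.exp 1 + Real.log (Real.exp 1 + 1 / ‖x - y‖))

/-- Pointwise conjugate exponent. -/
def conj (t : ℝ) : ℝ := t / (t - 1)

/-- Luxemburg norm (with values in `ℝ≥0∞`) of an `ℝ≥0∞`-valued function for a
variable exponent `p`. -/
def vnormE (p : Rn n → ℝ) (f : Rn n → ℝ≥0∞) : ℝ≥0∞ :=
  sInf {lam : ℝ≥0∞ | ∃ l : ℝ, 0 < l ∧ lam = ENNReal.ofReal l ∧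
    ∫⁻ x, (f x / ENNReal.ofReal l) ^ p x ≤ 1}

/-- Variable exponent Lebesgue (Luxemburg) norm. -/
def vnorm (p : Rn n → ℝ) (f : Rn n → ℝ) : ℝ≥0∞ :=
  vnormE p fun x => ENNReal.ofReal |f x|

/-- `φ_p(x,t)` for an extended exponent : `t^p` if `p < ∞`, and `∞·χ_{(1,∞)}(t)` if `p = ∞`. -/
def phiExp (pe : ℝ≥0∞) (t : ℝ≥0∞) : ℝ≥0∞ :=
  if pe = ⊤ then (if t ≤ 1 then 0 else ⊤) else t ^ pe.toReal

/-- Luxemburg norm for an extended (possibly infinite) variable exponent. -/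
def vnormX (p : Rn n → ℝ≥0∞) (f : Rn n → ℝ) : ℝ≥0∞ :=
  sInf {lam : ℝ≥0∞ | ∃ l : ℝ, 0 < l ∧ lam = ENNReal.ofReal l ∧
    ∫⁻ x, phiExp (p x) (ENNReal.ofReal (|f x| / l)) ≤ 1}

/-- The Musielak–Orlicz norm of the space `L^{p(·)}(log L)^{q(·)}`. -/
def llognorm (p q : Rn n → ℝ) (f : Rn n → ℝ) : ℝ≥0∞ :=
  sInf {lam : ℝ≥0∞ | ∃ l : ℝ, 0 < l ∧ lam = ENNReal.ofReal l ∧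
    ∫⁻ x, ENNReal.ofReal ((|f x| / l) ^ p x *
      Real.log (Real.exp 1 + |f x| / l) ^ q x) ≤ 1}

/-- Generalized Φ-function. -/
def IsGPhi (Ψ : Rn n → ℝ → ℝ≥0∞) : Prop :=
  (∀ t : ℝ, Measurable fun x => Ψ x t) ∧
  (∀ x, ConvexOn ℝ≥0 (Ici (0:ℝ)) (Ψ x)) ∧
  (∀ x, Ψ x 0 = 0) ∧
  (∀ x, Filter.Tendsto (Ψ x) (nhdsWithin 0 (Ioi 0)) (nhds 0)) ∧
  (∀ x, Filter.Tendsto (Ψ x) Filter.atTop (nhds ⊤))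

/-- Luxemburg norm associated to a generalized Φ-function. -/
def gnorm (Ψ : Rn n → ℝ → ℝ≥0∞) (f : Rn n → ℝ) : ℝ≥0∞ :=
  sInf {lam : ℝ≥0∞ | ∃ l : ℝ, 0 < l ∧ lam = ENNReal.ofReal l ∧
    ∫⁻ x, Ψ x (|f x| / l) ≤ 1}

/-- Generalized inverse of a generalized Φ-function. -/
def ginv (Ψ : Rn n → ℝ → ℝ≥0∞) (x : Rn n) (t : ℝ≥0∞) : ℝ :=
  sInf {u : ℝ | 0 ≤ u ∧ t ≤ Ψ x u}

/-- Conjugate (Legendre transform) of a generalized Φ-function. -/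
def gconj (Ψ : Rn n → ℝ → ℝ≥0∞) (x : Rn n) (u : ℝ) : ℝ≥0∞ :=
  ⨆ t : Ici (0:ℝ), ENNReal.ofReal (t.1 * u) - Ψ x t.1

/-- Condition 𝓕 on a triple of generalized Φ-functions. -/
def CondF (A B D : Rn n → ℝ → ℝ≥0∞) : Prop :=
  ∃ C : ℝ, 0 < C ∧
    (∀ (c : Rn n) (l : ℝ), 0 < l →
      gnorm A (chi (cubeSet c l)) * gnorm B (chi (cubeSet c l)) ≤
        ENNReal.ofReal C * gnorm D (chi (cubeSet c l))) ∧
    (∀ (x : Rn n) (t : ℝ≥0∞), ginv A x t * ginv B x t ≤ C * ginv D x t) ∧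
    (∀ (c : Rn n) (l : ℝ), 0 < l →
      gnorm D (chi (cubeSet c l)) * gnorm (gconj D) (chi (cubeSet c l)) ≤
        ENNReal.ofReal (C * l ^ n))

/-- Maximal operator associated to a generalized Φ-function. -/
def gmax (Ψ : Rn n → ℝ → ℝ≥0∞) (f : Rn n → ℝ) (x : Rn n) : ℝ≥0∞ :=
  ⨆ (c : Rn n) (l : ℝ) (_ : 0 < l) (_ : x ∈ cubeSet c l),
    gnorm Ψ ((cubeSet c l).indicator f) / gnorm Ψ (chi (cubeSet c l))

/-- Fractional maximal operator associated to a generalized Φ-function, where the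
fractional exponent `β` is allowed to take the value `∞`. -/
def gmaxFrac (β : Rn n → ℝ≥0∞) (Ψ : Rn n → ℝ → ℝ≥0∞) (f : Rn n → ℝ) (x : Rn n) : ℝ≥0∞ :=
  ⨆ (c : Rn n) (l : ℝ) (_ : 0 < l) (_ : x ∈ cubeSet c l),
    vnormX β (chi (cubeSet c l)) *
      gnorm Ψ ((cubeSet c l).indicator f) / gnorm Ψ (chi (cubeSet c l))

/-- `φ_{a,b}(t) = t^a (log(e+t))^b`. -/
def phiab (a b t : ℝ) : ℝ := t ^ a * Real.log (Real.exp 1 + t) ^ b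

/-- Generalized inverse of `φ_{a,b}`. -/
def phiInv (a b s : ℝ) : ℝ := sInf {u : ℝ | 0 ≤ u ∧ s ≤ phiab a b u}

/-- The annulus `{x : r < ‖x‖ ≤ R}`. -/
def annulus (r R : ℝ) : Set (Rn n) := {x | r < ‖x‖ ∧ ‖x‖ ≤ R}

/-- `K̄(t) = ess sup_{t<|x|≤2t} K(x)`. -/
def Kbar (K : Rn n → ℝ) (t : ℝ) : ℝ≥0∞ :=
  essSup (fun x => ENNReal.ofReal (K x)) (volume.restrict (annulus t (2 * t)))

/-- `K̃(t) = ∫_{|z|≤t} K(z) dz`. -/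
def Ktilde (K : Rn n → ℝ) (t : ℝ) : ℝ :=
  ∫ z in {z : Rn n | ‖z‖ ≤ t}, K z

/-- The class 𝔇 of kernels, with explicit parameters `c`, `δ`, `ε`. -/
def ClassDWith (K : Rn n → ℝ) (c δ ε : ℝ) : Prop :=
  LocallyIntegrable K ∧ (∀ x, 0 ≤ K x) ∧
  0 < c ∧ 0 < δ ∧ 0 ≤ ε ∧ ε < 1 ∧
  ∀ k : ℤ,
    essSup (fun x => ENNReal.ofReal (K x))
        (volume.restrict (annulus ((2:ℝ) ^ k) ((2:ℝ) ^ (k+1)))) ≤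
      ENNReal.ofReal ((c / (2:ℝ) ^ (k * (n:ℤ))) *
        ∫ y in annulus (δ * (1-ε) * (2:ℝ) ^ k) (2 * δ * (1+ε) * (2:ℝ) ^ k), K y)

/-- The class 𝔇 of kernels. -/
def ClassD (K : Rn n → ℝ) : Prop := ∃ c δ ε : ℝ, ClassDWith K c δ ε

/-- The half-open dyadic cube `2^{-k}([0,1)^n + m)`. -/
def dyadicSet (k : ℤ) (m : Fin n → ℤ) : Set (Rn n) :=
  {x | ∀ i, (m i : ℝ) * (2:ℝ) ^ (-k) ≤ x i ∧ x i < ((m i : ℝ) + 1) * (2:ℝ) ^ (-k)}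

/-- The center of the dyadic cube `2^{-k}([0,1)^n + m)`. -/
def dyadicCenter (k : ℤ) (m : Fin n → ℤ) : Rn n :=
  (WithLp.equiv 2 (Fin n → ℝ)).symm fun i => ((m i : ℝ) + 1 / 2) * (2:ℝ) ^ (-k)

end VarExp


namespace MeasureTheory

theorem le_integral_mul_integral_of_le_mul {α : Type*} [MeasurableSpace α] {μ : Measure α}
    [IsProbabilityMeasure μ] {f g : α → ℝ} {t : ℝ} (hf : Integrable f μ) (hg : Integrable g μ)
    (hf0 : 0 ≤ᵐ[μ] f) (hg0 : 0 ≤ᵐ[μ] g) (hfg : ∀ᵐ x ∂μ, t ≤ f x * g x) :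
    t ≤ (∫ x, f x ∂μ) * ∫ x, g x ∂μ := by
  rcases le_or_gt t 0 with ht | ht
  · exact ht.trans (mul_nonneg (integral_nonneg_of_ae hf0) (integral_nonneg_of_ae hg0))
  have integral_pos : ∀ h k : α → ℝ, Integrable h μ → 0 ≤ᵐ[μ] h →
      (∀ᵐ x ∂μ, t ≤ h x * k x) → 0 < ∫ x, h x ∂μ := by
    intro h k hi h0 hhk
    refine (integral_nonneg_of_ae h0).lt_of_ne fun hzero => ?_
    have h_ae_zero := (integral_eq_zero_iff_of_nonneg_ae h0 hi).1 hzero.symm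
    obtain ⟨x, hx, hx0⟩ := (hhk.and h_ae_zero).exists
    rw [hx0, Pi.zero_apply, zero_mul] at hx
    exact ht.not_ge hx
  set A := ∫ x, f x ∂μ
  set B := ∫ x, g x ∂μ
  have hA : 0 < A := integral_pos f g hf hf0 hfg
  have hB : 0 < B := integral_pos g f hg hg0 (by simpa only [mul_comm] using hfg)
  set r := Real.sqrt (t / (A * B))
  -- AM-GM for `f / A` and `g / B`, whose product is at least `r ^ 2`
  have hpt : ∀ᵐ x ∂μ, 2 * r ≤ f x / A + g x / B := by
    filter_upwards [hf0, hg0, hfg] with x hfx hgx hx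
    have hr : r ^ 2 ≤ f x / A * (g x / B) := by
      rw [Real.sq_sqrt (by positivity), div_mul_div_comm]
      gcongr
    have : 0 ≤ r := Real.sqrt_nonneg _
    nlinarith [sq_nonneg (f x / A - g x / B), div_nonneg hfx hA.le, div_nonneg hgx hB.le]
  have hr : r ≤ 1 := by
    have : 2 * r ≤ 2 :=
      calc 2 * r = ∫ _, 2 * r ∂μ := by simp
        _ ≤ ∫ x, (f x / A + g x / B) ∂μ :=
          integral_mono_ae (integrable_const _) ((hf.div_const A).add (hg.div_const B)) hpt
        _ = 2 := by
          rw [integral_add (hf.div_const A) (hg.div_const B), integral_div, integral_div,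
            div_self hA.ne', div_self hB.ne']
          norm_num
    linarith
  have : t / (A * B) ≤ 1 := by
    rw [← Real.sq_sqrt (by positivity : 0 ≤ t / (A * B))]
    nlinarith [Real.sqrt_nonneg (t / (A * B))]
  rwa [div_le_one (by positivity)] at this

end MeasureTheory

namespace VarExp

open Real

variable {n : ℕ}

lemma one_le_log_exp_one_add {u : ℝ} (hu : 0 ≤ u) : 1 ≤ log (exp 1 + u) :=
  (le_log_iff_exp_le (by positivity)).2 (by linarith)

lemma phiab_monotoneOn {a b : ℝ} (ha : 0 ≤ a) (hb : 0 ≤ b) :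
    MonotoneOn (phiab a b) (Ici 0) := by
  intro u (hu : 0 ≤ u) v (hv : 0 ≤ v) huv
  have := one_le_log_exp_one_add hu
  unfold phiab
  gcongr

lemma continuousOn_phiab {a : ℝ} (ha : 0 < a) (b : ℝ) : ContinuousOn (phiab a b) (Ici 0) := by
  intro u (hu : 0 ≤ u)
  have hlog : log (exp 1 + u) ≠ 0 := by linarith [one_le_log_exp_one_add hu]
  exact ((continuousAt_rpow_const u a (Or.inr ha.le)).mul
    (((continuousAt_log (by positivity)).comp (by fun_prop)).rpow_const
      (Or.inl hlog))).continuousWithinAt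

lemma le_phiab_max_one {a b : ℝ} (ha : 1 ≤ a) (hb : 0 ≤ b) (s : ℝ) :
    s ≤ phiab a b (max 1 s) := by
  have h1 : (1 : ℝ) ≤ max 1 s := le_max_left _ _
  calc s ≤ max 1 s := le_max_right _ _
    _ ≤ max 1 s ^ a := self_le_rpow_of_one_le h1 ha
    _ ≤ phiab a b (max 1 s) := le_mul_of_one_le_right (by positivity)
          (Real.one_le_rpow (one_le_log_exp_one_add (by linarith)) hb)

lemma phiInv_nonneg (a b s : ℝ) : 0 ≤ phiInv a b s :=
  Real.sInf_nonneg fun _ hu => hu.1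

lemma phiInv_le {a b s u : ℝ} (hu : 0 ≤ u) (h : s ≤ phiab a b u) : phiInv a b s ≤ u :=
  csInf_le ⟨0, fun _ hv => hv.1⟩ ⟨hu, h⟩

lemma phiInv_le_max_one {a b : ℝ} (ha : 1 ≤ a) (hb : 0 ≤ b) (s : ℝ) :
    phiInv a b s ≤ max 1 s :=
  phiInv_le (by positivity) (le_phiab_max_one ha hb s)

lemma le_phiab_phiInv {a b : ℝ} (ha : 1 ≤ a) (hb : 0 ≤ b) (s : ℝ) :
    s ≤ phiab a b (phiInv a b s) := by
  have hclosed : IsClosed {u : ℝ | 0 ≤ u ∧ s ≤ phiab a b u} :=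
    (continuousOn_phiab (by linarith) b).preimage_isClosed_of_isClosed isClosed_Ici isClosed_Ici
  exact (hclosed.csInf_mem ⟨_, by positivity, le_phiab_max_one ha hb s⟩
    ⟨0, fun _ hu => hu.1⟩).2

lemma lt_phiInv_iff {a b s u : ℝ} (ha : 1 ≤ a) (hb : 0 ≤ b) (hu : 0 ≤ u) :
    u < phiInv a b s ↔ phiab a b u < s := by
  constructor
  · intro h
    by_contra! h'
    exact (phiInv_le hu h').not_gt h
  · intro h
    by_contra! h'
    exact ((le_phiab_phiInv ha hb s).trans
      (phiab_monotoneOn (by linarith) hb (phiInv_nonneg a b s) hu h')).not_gt h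

lemma measurable_phiInv {α : Type*} [MeasurableSpace α] {a b : α → ℝ} (ha : Measurable a)
    (hb : Measurable b) (ha1 : ∀ x, 1 ≤ a x) (hb0 : ∀ x, 0 ≤ b x) (s : ℝ) :
    Measurable fun x => phiInv (a x) (b x) s := by
  refine measurable_of_Ioi fun u => ?_
  rcases lt_or_ge u 0 with hu | hu
  · convert MeasurableSet.univ
    exact eq_univ_of_forall fun x => hu.trans_le (phiInv_nonneg _ _ s)
  · have hpre : (fun x => phiInv (a x) (b x) s) ⁻¹' Ioi u = {x | phiab (a x) (b x) u < s} :=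
      ext fun x => lt_phiInv_iff (ha1 x) (hb0 x) hu
    rw [hpre]
    exact measurableSet_lt ((measurable_const.pow ha).mul (measurable_const.pow hb))
      measurable_const

lemma integrable_phiInv {α : Type*} [MeasurableSpace α] {μ : Measure α} [IsFiniteMeasure μ]
    {a b : α → ℝ} (ha : Measurable a) (hb : Measurable b) (ha1 : ∀ x, 1 ≤ a x)
    (hb0 : ∀ x, 0 ≤ b x) (s : ℝ) : Integrable (fun x => phiInv (a x) (b x) s) μ :=
  Integrable.of_bound (measurable_phiInv ha hb ha1 hb0 s).aestronglyMeasurable (max 1 s)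
    (ae_of_all _ fun x => by
      rw [norm_of_nonneg (phiInv_nonneg _ _ s)]
      exact phiInv_le_max_one (ha1 x) (hb0 x) s)

lemma rpow_inv_le_phiInv {a b β t : ℝ} (ha : 1 ≤ a) (hb : 0 ≤ b) (hbβ : b ≤ β)
    (ht : 0 < t) :
    ((2 * 2 ^ β)⁻¹ * t / log (exp 1 + t) ^ b) ^ a⁻¹ ≤ phiInv a b t := by
  set L := log (exp 1 + t)
  set x := (2 * 2 ^ β)⁻¹ * t / L ^ b
  have hL : 1 ≤ L := one_le_log_exp_one_add ht.le
  have hx0 : 0 ≤ x := by positivity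
  have hxt : x ≤ t := by
    calc x ≤ (2 * 2 ^ β)⁻¹ * t := div_le_self (by positivity) (Real.one_le_rpow hL hb)
      _ ≤ t := mul_le_of_le_one_left ht.le (inv_le_one_of_one_le₀ (by
          linarith [Real.one_le_rpow one_le_two (hb.trans hbβ)]))
  have hu : x ^ a⁻¹ ≤ 1 + t :=
    calc x ^ a⁻¹ ≤ (1 + x) ^ a⁻¹ := rpow_le_rpow hx0 (by linarith) (by positivity)
      _ ≤ 1 + x := rpow_le_self_of_one_le (by linarith) (inv_le_one_of_one_le₀ ha)
      _ ≤ 1 + t := by linarith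
  -- `e + 1 + t ≤ (e + t) ^ 2` because `e ≥ 2`
  have hlog : log (exp 1 + x ^ a⁻¹) ≤ 2 * L := by
    rw [show 2 * L = Real.log ((exp 1 + t) ^ 2) by rw [Real.log_pow]; norm_num [L]]
    refine log_le_log (by positivity) ?_
    nlinarith [add_one_le_exp 1]
  refine ((lt_phiInv_iff ha hb (by positivity)).2 ?_).le
  have hlog0 : 0 ≤ log (exp 1 + x ^ a⁻¹) := by
    linarith [one_le_log_exp_one_add (by positivity : 0 ≤ x ^ a⁻¹)]
  calc phiab a b (x ^ a⁻¹) = x * log (exp 1 + x ^ a⁻¹) ^ b := by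
        rw [phiab, rpow_inv_rpow hx0 (by positivity)]
    _ ≤ x * (2 * L) ^ b := by gcongr
    _ = (2 * 2 ^ β)⁻¹ * 2 ^ b * t := by
        rw [mul_rpow zero_le_two (by positivity)]
        simp only [x]
        field_simp
    _ ≤ (2 * 2 ^ β)⁻¹ * 2 ^ β * t := by
        gcongr
        norm_num
    _ < t := by
        field_simp
        linarith

lemma one_le_conj {a : ℝ} (ha : 1 < a) : 1 ≤ conj a := by
  rw [conj, le_div_iff₀ (by linarith)]
  linarith

lemma le_phiInv_mul_phiInv_conj {a b β t : ℝ} (ha : 1 < a) (hb : 0 ≤ b) (hbβ : b ≤ β)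
    (ht : 0 ≤ t) :
    (2 * 2 ^ β)⁻¹ * t ≤ phiInv a b t * (log (exp 1 + t) ^ b * phiInv (conj a) b t) := by
  rcases ht.eq_or_lt with rfl | ht
  · rw [mul_zero]
    exact mul_nonneg (phiInv_nonneg _ _ _) (mul_nonneg
      (rpow_nonneg (by linarith [one_le_log_exp_one_add le_rfl]) _) (phiInv_nonneg _ _ _))
  set L := log (exp 1 + t)
  set x := (2 * 2 ^ β)⁻¹ * t / L ^ b
  have hL : 0 < L := by linarith [one_le_log_exp_one_add ht.le]
  have hx : 0 < x := by positivity
  have hexp : a⁻¹ + (conj a)⁻¹ = 1 := by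
    have : a - 1 ≠ 0 := by linarith
    rw [conj]
    field_simp
    ring
  calc (2 * 2 ^ β)⁻¹ * t = L ^ b * (x ^ a⁻¹ * x ^ (conj a)⁻¹) := by
        rw [← rpow_add hx, hexp, Real.rpow_one]
        simp only [x]
        field_simp
    _ ≤ L ^ b * (phiInv a b t * phiInv (conj a) b t) := by
        gcongr
        · exact phiInv_nonneg _ _ _
        · exact rpow_inv_le_phiInv ha.le hb hbβ ht
        · exact rpow_inv_le_phiInv (one_le_conj ha) hb hbβ ht
    _ = phiInv a b t * (L ^ b * phiInv (conj a) b t) := by ring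

lemma ball_subset_cubeSet (c : Rn n) (l : ℝ) : Metric.ball c (l / 2) ⊆ cubeSet c l := by
  intro x hx i
  rw [Metric.mem_ball, dist_eq_norm] at hx
  have := PiLp.norm_apply_le (x - c) i
  simp only [PiLp.sub_apply, Real.norm_eq_abs] at this
  linarith

lemma isBounded_cubeSet (c : Rn n) (l : ℝ) : Bornology.IsBounded (cubeSet c l) := by
  have hcube : cubeSet c l = EuclideanSpace.equiv (Fin n) ℝ ⁻¹'
      Icc (fun i => c i - l / 2) (fun i => c i + l / 2) := by
    ext x
    simp only [cubeSet, mem_ofPred_eq, mem_preimage, mem_Icc, Pi.le_def, abs_le]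
    rw [← forall_and]
    refine forall_congr' fun i => ?_
    change _ ↔ c i - l / 2 ≤ x i ∧ x i ≤ c i + l / 2
    constructor <;> rintro ⟨h₁, h₂⟩ <;> constructor <;> linarith
  rw [hcube]
  exact (EuclideanSpace.equiv (Fin n) ℝ).antilipschitz.isBounded_preimage
    (Metric.isBounded_Icc _ _)

instance (c : Rn n) (l : ℝ) : IsFiniteMeasure (volume.restrict (cubeSet c l)) :=
  isFiniteMeasure_restrict.2 (isBounded_cubeSet c l).measure_lt_top.ne

lemma neZero_volume_restrict_cubeSet (c : Rn n) {l : ℝ} (hl : 0 < l) :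
    NeZero (volume.restrict (cubeSet c l)) :=
  ⟨fun h => (Metric.measure_ball_pos volume c (half_pos hl)).ne'
    (measure_mono_null (ball_subset_cubeSet c l) (Measure.restrict_eq_zero.1 h))⟩

end VarExp

open VarExp in
theorem statement6_general (n : ℕ) (pm pp qp : ℝ) (hpm : 1 < pm) :
    ∃ C : ℝ, 0 < C ∧ ∀ p q : Rn n → ℝ, Measurable p → Measurable q →
      (∀ x, pm ≤ p x ∧ p x ≤ pp) → (∀ x, 0 ≤ q x ∧ q x ≤ qp) →
      ∀ (c : Rn n) (l : ℝ), 0 < l → ∀ t : ℝ, 0 ≤ t →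
        t ≤ C * (⨍ x in cubeSet c l, phiInv (p x) (q x) t) *
          ⨍ x in cubeSet c l, Real.log (Real.exp 1 + t) ^ q x * phiInv (conj (p x)) (q x) t := by
  refine ⟨2 * 2 ^ qp, by positivity, fun p q hp hq hpb hqb c l hl t ht => ?_⟩
  have hp1 : ∀ x, 1 < p x := fun x => hpm.trans_le (hpb x).1
  have hconj : Measurable fun x => conj (p x) := hp.div (hp.sub_const 1)
  have hL : 1 ≤ Real.log (Real.exp 1 + t) := one_le_log_exp_one_add ht
  have := neZero_volume_restrict_cubeSet c hl
  -- `⨍ x in Q, f x` is by definition the integral against the normalized restriction to `Q`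
  have hprod := le_integral_mul_integral_of_le_mul
    (μ := (volume.restrict (cubeSet c l) univ)⁻¹ • volume.restrict (cubeSet c l))
    (integrable_phiInv hp hq (fun x => (hp1 x).le) (fun x => (hqb x).1) t)
    ((integrable_phiInv hconj hq (fun x => one_le_conj (hp1 x)) (fun x => (hqb x).1) t).bdd_mul
      (c := Real.log (Real.exp 1 + t) ^ qp) (measurable_const.pow hq).aestronglyMeasurable
      (ae_of_all _ fun x => by
        rw [Real.norm_of_nonneg (by positivity)]
        exact Real.rpow_le_rpow_of_exponent_le hL (hqb x).2))
    (ae_of_all _ fun x => phiInv_nonneg _ _ t)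
    (ae_of_all _ fun x => mul_nonneg (by positivity) (phiInv_nonneg _ _ t))
    (ae_of_all _ fun x => le_phiInv_mul_phiInv_conj (hp1 x) (hqb x).1 (hqb x).2 ht)
  calc t = 2 * 2 ^ qp * ((2 * 2 ^ qp)⁻¹ * t) := by field_simp
    _ ≤ _ := (mul_le_mul_of_nonneg_left hprod (by positivity)).trans_eq (mul_assoc _ _ _).symm

open VarExp in
/-- `t ≲ (⨍_Q φ^{-1}_{p(x),q(x)}(t) dx) (⨍_Q (log(e+t))^{q(x)} φ^{-1}_{p'(x),q(x)}(t) dx)`. -/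
theorem statement6 (n : ℕ) (pm pp qp : ℝ) (hpm : 1 < pm) (hppm : pm ≤ pp) (hqp : 0 ≤ qp) :
    ∃ C : ℝ, 0 < C ∧ ∀ p q : Rn n → ℝ, Measurable p → Measurable q →
      (∀ x, pm ≤ p x ∧ p x ≤ pp) → (∀ x, 0 ≤ q x ∧ q x ≤ qp) →
      ∀ (c : Rn n) (l : ℝ), 0 < l → ∀ t : ℝ, 0 ≤ t →
        t ≤ C * (⨍ x in cubeSet c l, phiInv (p x) (q x) t) *
          ⨍ x in cubeSet c l, Real.log (Real.exp 1 + t) ^ q x * phiInv (conj (p x)) (q x) t :=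
  statement6_general n pm pp qp hpm
end
end

section
/- Let δ : ℝⁿ → ℝ be measurable with 0 < δ⁻ ≤ δ(x) ≤ δ⁺ < 1 and such that the exponent n/δ(·) belongs to P^log(ℝⁿ). Let b : ℝⁿ → ℝ be locally integrable and suppose there is a constant C₀ > 0 with |b(x) − b(z)| ≤ C₀ |x − z|^{δ(x)} for all x, z ∈ ℝⁿ. Then for every positive integer k there is a constant C > 0, depending only on C₀, k, n and the constants of n/δ(·), such that for every cube Q ⊂ ℝⁿ and every z ∈ kQ: |b(z) − b_Q| ≤ C ‖χ_Q‖_{n/δ(·)}. -/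
open MeasureTheory ENNReal NNReal Set

noncomputable section

/-!
Let `Q` have sidelength `ℓ`, `z ∈ kQ`, `p = n/δ` and `A = √n (k+1)/2`, so that `|x - z| ≤ Aℓ` on
`Q`. Then `|b z - b x| ≤ C₀ u(x)` with `u(x) = (Aℓ)^{δ(x)}`, and `u(x)^{p(x)} = (Aℓ)^n` no longer
depends on `x`. For every `λ` admissible in the Luxemburg norm of `χ_Q`, the elementary inequality
`u ≤ λ + λ (u/λ)^p` (valid for `p ≥ 1`) integrates over `Q` to `∫_Q u ≤ λ (|Q| + (Aℓ)^n)`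
`= λ |Q| (1 + A^n)`. Averaging over `Q` and taking the infimum over `λ` gives the claim with
`C = C₀ (1 + A^n)`.
-/

lemma ENNReal.le_add_mul_div_rpow {a b : ℝ≥0∞} {q : ℝ} (hb₀ : b ≠ 0) (hb : b ≠ ⊤) (hq : 1 ≤ q) :
    a ≤ b + b * (a / b) ^ q := by
  rcases le_total a b with hab | hba
  · exact le_add_right hab
  · have h1 : 1 ≤ a / b := (ENNReal.le_div_iff_mul_le (.inl hb₀) (.inl hb)).2 (by rwa [one_mul])
    calc a = b * (a / b) := (ENNReal.mul_div_cancel hb₀ hb).symm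
      _ ≤ b * (a / b) ^ q := by
        gcongr
        simpa using ENNReal.rpow_le_rpow_of_exponent_le h1 hq
      _ ≤ b + b * (a / b) ^ q := le_add_self

lemma MeasureTheory.enorm_sub_setAverage_le {α : Type*} [MeasurableSpace α] {μ : Measure α}
    {s : Set α} {f : α → ℝ} (hf : IntegrableOn f s μ) (hs₀ : μ s ≠ 0) (hs : μ s ≠ ⊤) (a : ℝ) :
    ‖a - ⨍ x in s, f x ∂μ‖ₑ ≤ (μ s)⁻¹ * ∫⁻ x in s, ‖a - f x‖ₑ ∂μ := by
  have hsub : a - ⨍ x in s, f x ∂μ = (μ s).toReal⁻¹ • ∫ x in s, (a - f x) ∂μ := by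
    rw [integral_sub (integrableOn_const hs (C := a)) hf, setIntegral_const, setAverage_eq,
      smul_sub, measureReal_def, smul_smul, inv_mul_cancel₀ (ENNReal.toReal_ne_zero.2 ⟨hs₀, hs⟩), one_smul]
  rw [hsub, enorm_smul]
  gcongr
  · rw [Real.enorm_of_nonneg (by positivity), ENNReal.ofReal_inv_of_pos
      (ENNReal.toReal_pos hs₀ hs), ENNReal.ofReal_toReal hs]
  · exact enorm_integral_le_lintegral_enorm _

namespace VarExp

variable {n : ℕ}

lemma cubeSet_eq_preimage_ofLp (c : Rn n) (l : ℝ) :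
    cubeSet c l = WithLp.ofLp ⁻¹' univ.pi fun i => Icc (c i - l / 2) (c i + l / 2) := by
  ext x
  simp only [cubeSet, mem_ofPred_eq, mem_preimage, mem_univ_pi, mem_Icc, abs_le]
  refine forall_congr' fun i => ?_
  constructor <;> rintro ⟨h₁, h₂⟩ <;> constructor <;> linarith

lemma measurableSet_cubeSet (c : Rn n) (l : ℝ) : MeasurableSet (cubeSet c l) := by
  rw [cubeSet_eq_preimage_ofLp]
  exact WithLp.measurable_ofLp _ _ (MeasurableSet.univ_pi fun _ => measurableSet_Icc)

lemma isCompact_cubeSet (c : Rn n) (l : ℝ) : IsCompact (cubeSet c l) := by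
  rw [cubeSet_eq_preimage_ofLp]
  exact (PiLp.homeomorph 2 _).isCompact_preimage.2 (isCompact_univ_pi fun _ => isCompact_Icc)

lemma volume_cubeSet (c : Rn n) {l : ℝ} (hl : 0 ≤ l) :
    volume (cubeSet c l) = ENNReal.ofReal (l ^ n) := by
  rw [cubeSet_eq_preimage_ofLp, (PiLp.volume_preserving_ofLp _).measure_preimage
    (MeasurableSet.univ_pi fun _ => measurableSet_Icc).nullMeasurableSet, volume_pi_pi]
  simp [Real.volume_Icc, ENNReal.ofReal_pow hl]

lemma cavg_const (c : Rn n) {l : ℝ} (hl : 0 < l) (a : ℝ) : cavg c l (fun _ => a) = a := by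
  have hvol := volume_cubeSet c hl.le
  exact setAverage_const (by simp [hvol, hl]) (by simp [hvol]) a

lemma norm_sub_le_sqrt_mul {x y : Rn n} {M : ℝ} (hM : 0 ≤ M) (h : ∀ i, |x i - y i| ≤ M) :
    ‖x - y‖ ≤ √n * M := by
  rw [EuclideanSpace.norm_eq]
  calc √(∑ i, ‖(x - y) i‖ ^ 2) ≤ √(∑ _i : Fin n, M ^ 2) := by
        gcongr with i
        simpa using h i
    _ = √n * M := by simp [Real.sqrt_mul, Real.sqrt_sq hM]

lemma norm_sub_le_of_mem_cubeSet {c x z : Rn n} {l₁ l₂ : ℝ} (hx : x ∈ cubeSet c l₁)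
    (hz : z ∈ cubeSet c l₂) (hl : 0 ≤ l₁ + l₂) : ‖x - z‖ ≤ √n * ((l₁ + l₂) / 2) := by
  refine norm_sub_le_sqrt_mul (by linarith) fun i => ?_
  have := abs_sub_le (x i) (c i) (z i)
  rw [abs_sub_comm (c i)] at this
  linarith [hx i, hz i]

lemma lintegral_chi_div_rpow {p : Rn n → ℝ} {Q : Set (Rn n)} (hQ : MeasurableSet Q)
    (hp : ∀ x, 0 < p x) (t : ℝ≥0∞) :
    ∫⁻ x, (ENNReal.ofReal |chi Q x| / t) ^ p x = ∫⁻ x in Q, t⁻¹ ^ p x := by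
  rw [← lintegral_indicator hQ]
  congr with x
  by_cases hx : x ∈ Q <;> simp [chi, hx, ENNReal.zero_rpow_of_pos (hp x)]

lemma vnorm_chi_ne_top {p : Rn n → ℝ} {Q : Set (Rn n)} (hQ : MeasurableSet Q)
    (hQfin : volume Q ≠ ⊤) (hp : ∀ x, 1 ≤ p x) : vnorm p (chi Q) ≠ ⊤ := by
  set t := max 1 (volume Q).toReal
  have ht : 1 ≤ ENNReal.ofReal t := by simp [t]
  have ht₀ : ENNReal.ofReal t ≠ 0 := (one_pos.trans_le ht).ne'
  refine ne_top_of_le_ne_top ofReal_ne_top (sInf_le ⟨t, by positivity, rfl, ?_⟩)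
  rw [lintegral_chi_div_rpow hQ fun x => one_pos.trans_le (hp x)]
  calc ∫⁻ x in Q, (ENNReal.ofReal t)⁻¹ ^ p x ≤ ∫⁻ x in Q, (ENNReal.ofReal t)⁻¹ := by
        gcongr with x
        simpa using ENNReal.rpow_le_rpow_of_exponent_ge (ENNReal.inv_le_one.2 ht) (hp x)
    _ = (ENNReal.ofReal t)⁻¹ * volume Q := setLIntegral_const _ _
    _ ≤ (ENNReal.ofReal t)⁻¹ * ENNReal.ofReal t := by
        gcongr
        rw [← ENNReal.ofReal_toReal hQfin]
        exact ENNReal.ofReal_le_ofReal (le_max_right _ _)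
    _ = 1 := ENNReal.inv_mul_cancel ht₀ ofReal_ne_top

lemma setLIntegral_le_vnorm_chi_mul {p : Rn n → ℝ} {Q : Set (Rn n)} (hQ : MeasurableSet Q)
    (hQfin : volume Q ≠ ⊤) (hp : ∀ x, 1 ≤ p x) {g : Rn n → ℝ≥0∞} {M : ℝ≥0∞} (hM : M ≠ ⊤)
    (hg : ∀ x ∈ Q, g x ^ p x ≤ M) :
    ∫⁻ x in Q, g x ≤ vnorm p (chi Q) * (volume Q + M) := by
  rcases eq_or_ne (volume Q + M) 0 with h₀ | h₀
  · simp [Measure.restrict_eq_zero.2 (add_eq_zero.1 h₀).1]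
  have hfin : volume Q + M ≠ ⊤ := add_ne_top.2 ⟨hQfin, hM⟩
  rw [← ENNReal.div_le_iff h₀ hfin]
  refine le_sInf ?_
  rintro _ ⟨t, ht, rfl, hmod⟩
  rw [ENNReal.div_le_iff h₀ hfin]
  rw [lintegral_chi_div_rpow hQ fun x => one_pos.trans_le (hp x)] at hmod
  set s := ENNReal.ofReal t
  have hs₀ : s ≠ 0 := by simpa [s] using ht
  have hs : s ≠ ⊤ := ofReal_ne_top
  calc ∫⁻ x in Q, g x ≤ ∫⁻ x in Q, (s + s * M * s⁻¹ ^ p x) := by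
        refine setLIntegral_mono' hQ fun x hx => ?_
        calc g x ≤ s + s * (g x / s) ^ p x := ENNReal.le_add_mul_div_rpow hs₀ hs (hp x)
          _ = s + s * (g x ^ p x * s⁻¹ ^ p x) := by
            rw [div_eq_mul_inv, ENNReal.mul_rpow_of_nonneg _ _ (zero_le_one.trans (hp x))]
          _ ≤ s + s * M * s⁻¹ ^ p x := by
            rw [mul_assoc]
            gcongr
            exact hg x hx
    _ = s * volume Q + s * M * ∫⁻ x in Q, s⁻¹ ^ p x := by
        rw [lintegral_add_left measurable_const, setLIntegral_const,
          lintegral_const_mul' _ _ (mul_ne_top hs hM)]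
    _ ≤ s * volume Q + s * M * 1 := by gcongr
    _ = s * (volume Q + M) := by ring

lemma enorm_sub_cavg_le {δ : Rn n → ℝ} (hδ : ∀ x, 0 < δ x) (hp : ∀ x, 1 ≤ (n : ℝ) / δ x)
    {b : Rn n → ℝ} (hb : LocallyIntegrable b) {C₀ : ℝ} (hC₀ : 0 ≤ C₀)
    (hbl : ∀ x z : Rn n, |b x - b z| ≤ C₀ * ‖x - z‖ ^ δ x) {k : ℝ} (hk : 0 ≤ k) {c z : Rn n}
    {l : ℝ} (hl : 0 < l) (hz : z ∈ cubeSet c (k * l)) :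
    ‖b z - cavg c l b‖ₑ ≤ ENNReal.ofReal (C₀ * (1 + (√n * (k + 1) / 2) ^ n)) *
      vnorm (fun x => n / δ x) (chi (cubeSet c l)) := by
  set Q := cubeSet c l
  set A := √n * (k + 1) / 2
  have hQ := measurableSet_cubeSet c l
  have hvol : volume Q = ENNReal.ofReal (l ^ n) := volume_cubeSet c hl.le
  have hvol₀ : volume Q ≠ 0 := by simp [hvol, hl]
  have hvolfin : volume Q ≠ ⊤ := by simp [hvol]
  have hosc : ∀ x ∈ Q, ‖b z - b x‖ₑ ≤ ENNReal.ofReal C₀ * ENNReal.ofReal ((A * l) ^ δ x) := by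
    intro x hx
    have hdist : ‖x - z‖ ≤ A * l := by
      have := norm_sub_le_of_mem_cubeSet hx hz (add_nonneg hl.le (mul_nonneg hk hl.le))
      simp only [A]
      linarith
    rw [← ENNReal.ofReal_mul hC₀, Real.enorm_eq_ofReal_abs, abs_sub_comm]
    gcongr
    exact (hbl x z).trans (by gcongr; exact (hδ x).le)
  have hpow : ∀ x, ENNReal.ofReal ((A * l) ^ δ x) ^ ((n : ℝ) / δ x) =
      ENNReal.ofReal (A ^ n) * volume Q := fun x => by
    rw [ENNReal.ofReal_rpow_of_nonneg (by positivity) (zero_le_one.trans (hp x)),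
      ← Real.rpow_mul (by positivity), mul_div_cancel₀ _ (hδ x).ne', Real.rpow_natCast, hvol,
      ← ENNReal.ofReal_mul (by positivity), mul_pow]
  calc ‖b z - cavg c l b‖ₑ ≤ (volume Q)⁻¹ * ∫⁻ x in Q, ‖b z - b x‖ₑ :=
        enorm_sub_setAverage_le (hb.integrableOn_isCompact (isCompact_cubeSet c l)) hvol₀
          hvolfin _
    _ ≤ (volume Q)⁻¹ * (ENNReal.ofReal C₀ * ∫⁻ x in Q, ENNReal.ofReal ((A * l) ^ δ x)) := by
        gcongr (volume Q)⁻¹ * ?_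
        rw [← lintegral_const_mul' _ _ ofReal_ne_top]
        exact setLIntegral_mono' hQ hosc
    _ ≤ (volume Q)⁻¹ * (ENNReal.ofReal C₀ * (vnorm (fun x => n / δ x) (chi Q) *
          (volume Q + ENNReal.ofReal (A ^ n) * volume Q))) := by
        gcongr
        exact setLIntegral_le_vnorm_chi_mul hQ hvolfin hp (by finiteness) fun x _ => (hpow x).le
    _ = ENNReal.ofReal (C₀ * (1 + A ^ n)) * vnorm (fun x => n / δ x) (chi Q) := by
        rw [ENNReal.ofReal_mul hC₀, ENNReal.ofReal_add zero_le_one (by positivity),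
          ENNReal.ofReal_one]
        calc _ = (volume Q)⁻¹ * volume Q * (ENNReal.ofReal C₀ * (1 + ENNReal.ofReal (A ^ n)) *
              vnorm (fun x => n / δ x) (chi Q)) := by ring
          _ = _ := by rw [ENNReal.inv_mul_cancel hvol₀ hvolfin, one_mul]

end VarExp

open VarExp in
theorem statement11_general (n : ℕ) (δ : Rn n → ℝ) (d1 d2 : ℝ) (hd1 : 0 < d1) (hd2 : d2 < 1)
    (hdbd : ∀ x, d1 ≤ δ x ∧ δ x ≤ d2)
    (b : Rn n → ℝ) (hb : LocallyIntegrable b) (C₀ : ℝ) (hC₀ : 0 < C₀)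
    (hbl : ∀ x z : Rn n, |b x - b z| ≤ C₀ * ‖x - z‖ ^ δ x) :
    ∀ k : ℕ, 0 < k → ∃ C : ℝ, 0 < C ∧ ∀ (c : Rn n) (l : ℝ), 0 < l →
      ∀ z ∈ cubeSet c (k * l),
        |b z - cavg c l b| ≤
          C * (vnorm (fun x => (n : ℝ) / δ x) (chi (cubeSet c l))).toReal := by
  intro k _
  refine ⟨C₀ * (1 + (√n * (k + 1) / 2) ^ n), by positivity, fun c l hl z hz => ?_⟩
  rcases Nat.eq_zero_or_pos n with rfl | hn
  · have hconst : b = fun _ => b z := funext fun x => congrArg b (Subsingleton.elim x z)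
    rw [hconst, cavg_const c hl, sub_self, abs_zero]
    positivity
  have hδ : ∀ x, 0 < δ x := fun x => hd1.trans_le (hdbd x).1
  have hp : ∀ x, 1 ≤ (n : ℝ) / δ x := fun x => by
    rw [one_le_div (hδ x)]
    exact ((hdbd x).2.trans hd2.le).trans (by exact_mod_cast hn)
  have hfin : vnorm (fun x => (n : ℝ) / δ x) (chi (cubeSet c l)) ≠ ⊤ :=
    vnorm_chi_ne_top (measurableSet_cubeSet c l) (by simp [volume_cubeSet c hl.le]) hp
  have hest := ENNReal.toReal_mono (mul_ne_top ofReal_ne_top hfin)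
    (enorm_sub_cavg_le hδ hp hb hC₀.le hbl k.cast_nonneg hl hz)
  rwa [toReal_enorm, Real.norm_eq_abs, ENNReal.toReal_mul,
    ENNReal.toReal_ofReal (by positivity)] at hest

open VarExp in
/-- if `|b(x) - b(z)| ≤ C₀|x-z|^{δ(x)}` then `|b(z) - b_Q| ≲ ‖χ_Q‖_{n/δ(·)}`
for every `z ∈ kQ`. -/
theorem statement11 (n : ℕ) (δ : Rn n → ℝ) (d1 d2 : ℝ) (hd1 : 0 < d1) (hd2 : d2 < 1)
    (hdbd : ∀ x, d1 ≤ δ x ∧ δ x ≤ d2)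
    (hδlog : LogHolder fun x => (n : ℝ) / δ x)
    (b : Rn n → ℝ) (hb : LocallyIntegrable b) (C₀ : ℝ) (hC₀ : 0 < C₀)
    (hbl : ∀ x z : Rn n, |b x - b z| ≤ C₀ * ‖x - z‖ ^ δ x) :
    ∀ k : ℕ, 0 < k → ∃ C : ℝ, 0 < C ∧ ∀ (c : Rn n) (l : ℝ), 0 < l →
      ∀ z ∈ cubeSet c (k * l),
        |b z - cavg c l b| ≤
          C * (vnorm (fun x => (n : ℝ) / δ x) (chi (cubeSet c l))).toReal :=
  statement11_general n δ d1 d2 hd1 hd2 hdbd b hb C₀ hC₀ hbl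
end
end
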